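/- arXiv:2408.09884 — 2 statements merged into one kernel-verified Lean document; each statement's English description precedes it below -/
import Mathlib

section
/- Let (X, t) be a Polish space and let 𝒰 be a countable basis for t. Let t̂ be the topology on X generated by the subbasis {U : U ∈ 𝒰} ∪ {X ∖ U : U ∈ 𝒰}. Then t ≤ t̂ (so the identity map (X, t̂) → (X, t) is continuous), the topology t̂ has a basis consisting of t̂-clopen sets (i.e., (X, t̂) is zero-dimensional), and (X, t̂) is again a Polish space. -/
namespace Stmt5

/-- The zero-dimensional refinement: the topology generated by the subbasis consisting of
the basis sets `U ∈ 𝒰` together with their complements. -/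
def hatTop {X : Type*} (𝒰 : Set (Set X)) : TopologicalSpace X :=
  TopologicalSpace.generateFrom (𝒰 ∪ (compl '' 𝒰))

open Set TopologicalSpace Topology

/-- Adding the complement of an open set to a Polish topology keeps it Polish. -/
lemma polish_gen_compl {X : Type*} [t : TopologicalSpace X] [PolishSpace X]
    {U : Set X} (hU : IsOpen U) :
    @PolishSpace X (generateFrom ({V : Set X | IsOpen V} ∪ {Uᶜ})) := by
  classical
  haveI : PolishSpace U := hU.polishSpace
  haveI : PolishSpace (↥(Uᶜ)) := hU.isClosed_compl.polishSpace
  let f : ↥U ⊕ ↥(Uᶜ) ≃ X := Equiv.Set.sumCompl U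
  have hinl : (f ∘ Sum.inl) = (Subtype.val : U → X) :=
    funext fun x => Equiv.Set.sumCompl_apply_inl U x
  have hinr : (f ∘ Sum.inr) = (Subtype.val : ↥(Uᶜ) → X) :=
    funext fun x => Equiv.Set.sumCompl_apply_inr U x
  have key : ∀ s : Set X, IsOpen[TopologicalSpace.coinduced f instTopologicalSpaceSum] s ↔
      (IsOpen ((Subtype.val : U → X) ⁻¹' s) ∧ IsOpen ((Subtype.val : ↥(Uᶜ) → X) ⁻¹' s)) := by
    intro s
    rw [isOpen_coinduced, isOpen_sum_iff, ← preimage_comp, ← preimage_comp, hinl, hinr]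
  have hcoind : TopologicalSpace.coinduced f instTopologicalSpaceSum
      = generateFrom ({V : Set X | IsOpen V} ∪ {Uᶜ}) := by
    apply le_antisymm
    · apply le_generateFrom
      rintro s (hs | hs)
      · exact (key s).2 ⟨hs.preimage continuous_subtype_val, hs.preimage continuous_subtype_val⟩
      · rw [mem_singleton_iff] at hs
        subst hs
        refine (key _).2 ⟨?_, ?_⟩
        · have : (Subtype.val : U → X) ⁻¹' Uᶜ = ∅ := by
            ext x; simp [x.2]
          rw [this]; exact isOpen_empty
        · have : (Subtype.val : ↥(Uᶜ) → X) ⁻¹' Uᶜ = univ := Subtype.coe_preimage_self _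
          rw [this]; exact isOpen_univ
    · intro V hV
      rw [key] at hV
      obtain ⟨h1, h2⟩ := hV
      obtain ⟨W₁, hW₁, hW₁e⟩ := isOpen_induced_iff.1 h1
      obtain ⟨W₂, hW₂, hW₂e⟩ := isOpen_induced_iff.1 h2
      have e1 : U ∩ W₁ = U ∩ V := Subtype.preimage_coe_eq_preimage_coe_iff.1 hW₁e
      have e2 : Uᶜ ∩ W₂ = Uᶜ ∩ V := Subtype.preimage_coe_eq_preimage_coe_iff.1 hW₂e
      have hVeq : V = (U ∩ W₁) ∪ (Uᶜ ∩ W₂) := by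
        rw [e1, e2, ← union_inter_distrib_right, union_compl_self, univ_inter]
      have hgen : TopologicalSpace.GenerateOpen ({V : Set X | IsOpen V} ∪ {Uᶜ})
          ((U ∩ W₁) ∪ (Uᶜ ∩ W₂)) := by
        nth_rewrite 2 [← sUnion_pair]
        refine TopologicalSpace.GenerateOpen.sUnion _ ?_
        rintro s (rfl | rfl)
        · exact (TopologicalSpace.GenerateOpen.basic _ (Or.inl hU)).inter _ _
            (TopologicalSpace.GenerateOpen.basic _ (Or.inl hW₁))
        · exact (TopologicalSpace.GenerateOpen.basic _ (Or.inr rfl)).inter _ _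
            (TopologicalSpace.GenerateOpen.basic _ (Or.inl hW₂))
      rw [hVeq]
      exact hgen
  rw [← hcoind, ← f.induced_symm]
  exact f.symm.polishSpace_induced

theorem statement5 (X : Type*) (t : TopologicalSpace X) (hPolish : @PolishSpace X t)
    (𝒰 : Set (Set X)) (hcount : 𝒰.Countable)
    (hbasis : @TopologicalSpace.IsTopologicalBasis X t 𝒰) :
    (∀ U : Set X, @IsOpen X t U → @IsOpen X (hatTop 𝒰) U) ∧
    @Continuous X X (hatTop 𝒰) t id ∧
    (∃ ℬ : Set (Set X), @TopologicalSpace.IsTopologicalBasis X (hatTop 𝒰) ℬ ∧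
      ∀ A ∈ ℬ, @IsClopen X (hatTop 𝒰) A) ∧
    @PolishSpace X (hatTop 𝒰) := by
  classical
  have h1 : hatTop 𝒰 ≤ t := by
    rw [hbasis.eq_generateFrom]
    exact generateFrom_anti subset_union_left
  refine ⟨fun U hU => hU.mono h1, continuous_id_iff_le.2 h1, ?_, ?_⟩
  · -- clopen basis
    letI := hatTop 𝒰
    refine ⟨(fun f => ⋂₀ f) '' { f : Set (Set X) | f.Finite ∧ f ⊆ 𝒰 ∪ compl '' 𝒰 },
      isTopologicalBasis_of_subbasis rfl, ?_⟩
    rintro A ⟨F, ⟨hFfin, hFsub⟩, rfl⟩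
    show IsClopen (⋂₀ F)
    rw [sInter_eq_biInter]
    refine hFfin.isClopen_biInter fun s hs => ?_
    have hopen : ∀ u ∈ 𝒰 ∪ compl '' 𝒰, IsOpen u := fun u hu =>
      isOpen_generateFrom_of_mem hu
    rcases hFsub hs with h | ⟨V, hV, rfl⟩
    · exact ⟨isOpen_compl_iff.1 (hopen _ (Or.inr ⟨s, h, rfl⟩)), hopen _ (Or.inl h)⟩
    · refine ⟨isOpen_compl_iff.1 ?_, hopen _ (Or.inr ⟨V, hV, rfl⟩)⟩
      rw [compl_compl]
      exact hopen _ (Or.inl hV)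
  · -- Polish
    letI := t
    haveI := hPolish
    haveI : Countable ↥𝒰 := hcount.to_subtype
    let m : Option ↥𝒰 → TopologicalSpace X := fun o =>
      o.elim t fun U => generateFrom ({V : Set X | IsOpen[t] V} ∪ {(↑U : Set X)ᶜ})
    have hm_le : ∀ o, m o ≤ t := by
      rintro (_ | U)
      · exact le_rfl
      · calc m (some U) ≤ generateFrom {V : Set X | IsOpen[t] V} :=
              generateFrom_anti subset_union_left
          _ = t := generateFrom_setOf_isOpen t
    have hm_polish : ∀ o, @PolishSpace X (m o) := by
      rintro (_ | U)
      · exact hPolish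
      · exact polish_gen_compl (hbasis.isOpen U.2)
    have hpol : @PolishSpace X (⨅ o, m o) :=
      PolishSpace.iInf ⟨none, hm_le⟩ hm_polish
    have heq : hatTop 𝒰 = ⨅ o, m o := by
      apply le_antisymm
      · refine le_iInf ?_
        rintro (_ | U)
        · exact h1
        · refine le_generateFrom ?_
          rintro s (hs | hs)
          · exact hs.mono h1
          · rw [mem_singleton_iff] at hs
            subst hs
            exact isOpen_generateFrom_of_mem (Or.inr ⟨U, U.2, rfl⟩)
      · refine le_generateFrom ?_
        rintro s (hs | ⟨V, hV, rfl⟩)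
        · exact ((hbasis.isOpen hs).mono (iInf_le m none))
        · refine IsOpen.mono ?_ (iInf_le m (some ⟨V, hV⟩))
          exact isOpen_generateFrom_of_mem (Or.inr rfl)
    rw [heq]
    exact hpol

end Stmt5
end

section
/- Let X be a set, let t be a Hausdorff topology on X, and let (t_i)_{i∈I} be a family of topologies on X, each finer than t. Let t_sup = ⨆_{i∈I} t_i be the supremum of the topologies t_i. Then: (i) a subset K ⊆ X is compact for t_sup if and only if K is compact for every t_i; and (ii) if for each i ∈ I a set K_i ⊆ X is compact for t_i, then the intersection ⋂_{i∈I} K_i is compact for t_sup. -/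
namespace Stmt9

/- Note on conventions: in Mathlib, the order on `TopologicalSpace X` has `t' ≤ t` meaning
that `t'` is finer than `t`.  Hence the (mathematical) supremum of a family of topologies
`(t_i)`, i.e. the coarsest topology finer than every `t_i`, is the Mathlib infimum
`⨅ i, t_i`. -/

/-- Compactness passes from a finer to a coarser topology. -/
lemma compact_mono {X : Type*} {t₁ t₂ : TopologicalSpace X} (h : t₁ ≤ t₂) {K : Set X}
    (hK : @IsCompact X t₁ K) : @IsCompact X t₂ K := by
  have hid : @Continuous X X t₁ t₂ id := continuous_id_iff_le.mpr h
  simpa using @IsCompact.image X X t₁ t₂ K id hK hid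

/-- Every set is compact in the indiscrete topology. -/
lemma isCompact_top {X : Type*} (K : Set X) : @IsCompact X ⊤ K := by
  letI : TopologicalSpace X := ⊤
  intro f hf hfK
  rcases K.eq_empty_or_nonempty with rfl | ⟨x, hx⟩
  · exact absurd (Filter.empty_mem_iff_bot.mp (hfK (Filter.mem_principal_self _))) hf.ne
  · exact ⟨x, hx, by rw [ClusterPt, nhds_top, top_inf_eq]; exact hf⟩

/-- On a set compact for a topology finer than a Hausdorff topology, the two
subspace topologies agree. -/
lemma induced_eq {X : Type*} {t₁ t₂ : TopologicalSpace X} (h : t₁ ≤ t₂)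
    (ht₂ : @T2Space X t₂) {K : Set X} (hK : @IsCompact X t₁ K) :
    TopologicalSpace.induced (Subtype.val : K → X) t₁ =
      TopologicalSpace.induced (Subtype.val : K → X) t₂ := by
  set s₁ : TopologicalSpace K := TopologicalSpace.induced Subtype.val t₁ with hs₁
  set s₂ : TopologicalSpace K := TopologicalSpace.induced Subtype.val t₂ with hs₂
  have hle : s₁ ≤ s₂ := induced_mono h
  have hcs : @CompactSpace K s₁ := (@isCompact_iff_compactSpace X t₁ K).mp hK
  have ht2' : @T2Space K s₂ :=
    @Topology.IsEmbedding.t2Space _ _ s₂ t₂ ht₂ _ ⟨⟨rfl⟩, Subtype.val_injective⟩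
  have hcont : @Continuous K K s₁ s₂ id := continuous_id_iff_le.mpr hle
  have hcm : @IsClosedMap K K s₁ s₂ id := @Continuous.isClosedMap K K s₁ s₂ hcs ht2' id hcont
  refine le_antisymm hle (isOpen_implies_isOpen_iff.mp fun s hs => ?_)
  have hc : @IsClosed K s₁ sᶜ := @IsClosed.mk K s₁ _ (by rwa [compl_compl])
  have h2 : @IsClosed K s₂ (id '' sᶜ) := hcm _ hc
  rw [Set.image_id] at h2
  have := @IsClosed.isOpen_compl K s₂ _ h2
  rwa [compl_compl] at this

theorem statement9 {X : Type*} {I : Type*} (t : TopologicalSpace X) (ht : @T2Space X t)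
    (ti : I → TopologicalSpace X)
    (hfiner : ∀ i, ∀ U : Set X, @IsOpen X t U → @IsOpen X (ti i) U) :
    -- (i) a set is compact for the supremum topology iff it is compact for every `t_i`
    (∀ K : Set X, @IsCompact X (⨅ i, ti i) K ↔ ∀ i, @IsCompact X (ti i) K) ∧
    -- (ii) an intersection of `t_i`-compacta is compact for the supremum topology
    (∀ Ki : I → Set X, (∀ i, @IsCompact X (ti i) (Ki i)) →
      @IsCompact X (⨅ i, ti i) (⋂ i, Ki i)) := by
  have hle : ∀ i, ti i ≤ t := fun i => isOpen_implies_isOpen_iff.mp (hfiner i)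
  have part1 : ∀ K : Set X, @IsCompact X (⨅ i, ti i) K ↔ ∀ i, @IsCompact X (ti i) K := by
    intro K
    constructor
    · intro hK i
      exact compact_mono (iInf_le ti i) hK
    · intro hK
      rcases isEmpty_or_nonempty I with hI | hI
      · rw [iInf_of_empty]
        exact isCompact_top K
      · obtain ⟨i₀⟩ := hI
        haveI : Nonempty I := ⟨i₀⟩
        have hKt : @IsCompact X t K := compact_mono (hle i₀) (hK i₀)
        rw [@isCompact_iff_compactSpace X (⨅ i, ti i) K]
        have : TopologicalSpace.induced (Subtype.val : K → X) (⨅ i, ti i)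
            = TopologicalSpace.induced (Subtype.val : K → X) t := by
          rw [induced_iInf]
          have : ∀ i, TopologicalSpace.induced (Subtype.val : K → X) (ti i)
              = TopologicalSpace.induced (Subtype.val : K → X) t := fun i =>
            induced_eq (hle i) ht (hK i)
          simp_rw [this]
          exact iInf_const
        show @CompactSpace K (TopologicalSpace.induced Subtype.val (⨅ i, ti i))
        rw [this]
        exact (@isCompact_iff_compactSpace X t K).mp hKt
  refine ⟨part1, fun Ki hKi => ?_⟩
  rw [part1]
  intro i
  have hclt : @IsClosed X t (⋂ j, Ki j) := by
    apply isClosed_iInter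
    intro j
    exact @IsCompact.isClosed X t ht _ (compact_mono (hle j) (hKi j))
  have hcl : @IsClosed X (ti i) (⋂ j, Ki j) := @IsClosed.mk X (ti i) _ (hfiner i _ (@IsClosed.isOpen_compl X t _ hclt))
  exact @IsCompact.of_isClosed_subset X (ti i) _ _ (hKi i) hcl (Set.iInter_subset Ki i)

end Stmt9
end
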